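/- Finite-ensemble C-bound: let h₁,…,h_K : X → {-1,+1} be classifiers, let q₁,…,q_K ≥ 0 with ∑_k q_k = 1 be weights, and let D be a probability measure on X × {-1,+1}. Define the weighted Gibbs risk r = ∫ ∑_{k=1}^K q_k · I[h_k(x) ≠ y] dD(x,y) and the weighted disagreement d = ∫ ∑_{k=1}^K ∑_{k'=1}^K q_k q_{k'} · I[h_k(x) ≠ h_{k'}(x)] dD(x,y). If r < 1/2, then d < 1/2 and the risk of the weighted majority vote, D{(x,y) : y·∑_{k=1}^K q_k h_k(x) ≤ 0}, is at most 1 - (1 - 2r)² / (1 - 2d). -/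

import Mathlib

/-!
Write `φ = ∑ₖ qₖ hₖ` and `M(x, y) = y φ(x)` for the margin of the vote. Since the labels and
the votes are `±1`, `I[a ≠ b] = (1 - a b) / 2`, so `r = (1 - 𝔼 M) / 2` and `d = (1 - 𝔼 M²) / 2`;
in particular `r < 1/2` says `𝔼 M > 0`. The bound then holds for every square-integrable `M`
with positive mean: pointwise `2 t M - t² M² ≤ I[M > 0]` for `t ≥ 0`, and integrating with
`t = 𝔼 M / 𝔼 M²` gives `(𝔼 M)² / 𝔼 M² ≤ P(M > 0)`.
-/

open MeasureTheory

section SecondMomentBound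

variable {α : Type*} [MeasurableSpace α] {μ : Measure α} {f : α → ℝ}

theorem two_mul_integral_sub_sq_mul_integral_sq_le_measureReal_pos [IsFiniteMeasure μ]
    (hmeas : Measurable f) (hf : MemLp f 2 μ) {t : ℝ} (ht : 0 ≤ t) :
    2 * t * ∫ x, f x ∂μ - t ^ 2 * ∫ x, f x ^ 2 ∂μ ≤ μ.real {x | 0 < f x} := by
  have hpos : MeasurableSet {x | 0 < f x} := measurableSet_lt measurable_const hmeas
  have hf1 : Integrable f μ := hf.integrable one_le_two
  have hpointwise : ∀ x, 2 * t * f x - t ^ 2 * f x ^ 2 ≤ {x | 0 < f x}.indicator 1 x := by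
    intro x
    by_cases hx : 0 < f x
    · simp only [Set.indicator_of_mem (show x ∈ {x | 0 < f x} from hx), Pi.one_apply]
      nlinarith [sq_nonneg (1 - t * f x)]
    · simp only [Set.indicator_of_notMem (show x ∉ {x | 0 < f x} from hx)]
      nlinarith [mul_nonpos_of_nonneg_of_nonpos ht (not_lt.mp hx), sq_nonneg (t * f x)]
  calc 2 * t * ∫ x, f x ∂μ - t ^ 2 * ∫ x, f x ^ 2 ∂μ
      = ∫ x, (2 * t * f x - t ^ 2 * f x ^ 2) ∂μ := by
        rw [integral_sub (hf1.const_mul _) (hf.integrable_sq.const_mul _), integral_const_mul,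
          integral_const_mul]
    _ ≤ ∫ x, {x | 0 < f x}.indicator 1 x ∂μ :=
        integral_mono ((hf1.const_mul _).sub (hf.integrable_sq.const_mul _))
          ((integrable_const 1).indicator hpos) hpointwise
    _ = μ.real {x | 0 < f x} := integral_indicator_one hpos

variable [IsProbabilityMeasure μ]

theorem integral_sq_pos_of_integral_pos (hmeas : Measurable f) (hf : MemLp f 2 μ)
    (hpos : 0 < ∫ x, f x ∂μ) : 0 < ∫ x, f x ^ 2 ∂μ := by
  refine (integral_nonneg fun x => sq_nonneg (f x)).lt_of_ne fun hzero => ?_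
  have := two_mul_integral_sub_sq_mul_integral_sq_le_measureReal_pos hmeas hf
    (inv_nonneg.mpr hpos.le)
  rw [← hzero, mul_zero, sub_zero, mul_assoc, inv_mul_cancel₀ hpos.ne'] at this
  linarith [measureReal_le_one (μ := μ) (s := {x | 0 < f x})]

theorem measureReal_nonpos_le_one_sub_sq_integral_div_integral_sq (hmeas : Measurable f)
    (hf : MemLp f 2 μ) (hpos : 0 < ∫ x, f x ∂μ) :
    μ.real {x | f x ≤ 0} ≤ 1 - (∫ x, f x ∂μ) ^ 2 / ∫ x, f x ^ 2 ∂μ := by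
  have hsq := integral_sq_pos_of_integral_pos hmeas hf hpos
  have := two_mul_integral_sub_sq_mul_integral_sq_le_measureReal_pos hmeas hf
    (div_nonneg hpos.le hsq.le)
  have hcompl : {x | f x ≤ 0} = {x | 0 < f x}ᶜ := by ext; simp
  rw [hcompl, probReal_compl_eq_one_sub (measurableSet_lt measurable_const hmeas)]
  have hoptimal : 2 * ((∫ x, f x ∂μ) / ∫ x, f x ^ 2 ∂μ) * ∫ x, f x ∂μ
      - ((∫ x, f x ∂μ) / ∫ x, f x ^ 2 ∂μ) ^ 2 * ∫ x, f x ^ 2 ∂μ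
      = (∫ x, f x ∂μ) ^ 2 / ∫ x, f x ^ 2 ∂μ := by
    field_simp
    ring
  linarith

theorem integral_one_sub_div_two (hf : Integrable f μ) :
    ∫ x, (1 - f x) / 2 ∂μ = (1 - ∫ x, f x ∂μ) / 2 := by
  rw [integral_div, integral_sub (integrable_const 1) hf, integral_const, probReal_univ, one_smul]

end SecondMomentBound

section WeightedVote

theorem ite_ne_eq_one_sub_mul_div_two {a b : ℝ} (ha : a = 1 ∨ a = -1) (hb : b = 1 ∨ b = -1) :
    (if a ≠ b then (1 : ℝ) else 0) = (1 - a * b) / 2 := by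
  rcases ha with rfl | rfl <;> rcases hb with rfl | rfl <;> norm_num

variable {ι : Type*} [Fintype ι] {q : ι → ℝ} {a : ι → ℝ}

theorem sum_mul_ite_ne_eq (hq : ∑ i, q i = 1) (ha : ∀ i, a i = 1 ∨ a i = -1) {b : ℝ}
    (hb : b = 1 ∨ b = -1) :
    ∑ i, q i * (if a i ≠ b then (1 : ℝ) else 0) = (1 - b * ∑ i, q i * a i) / 2 := by
  simp only [ite_ne_eq_one_sub_mul_div_two (ha _) hb]
  calc ∑ i, q i * ((1 - a i * b) / 2) = (∑ i, q i - b * ∑ i, q i * a i) / 2 := by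
        rw [Finset.mul_sum, ← Finset.sum_sub_distrib, Finset.sum_div]
        exact Finset.sum_congr rfl fun i _ => by ring
    _ = (1 - b * ∑ i, q i * a i) / 2 := by rw [hq]

theorem sum_sum_mul_ite_ne_eq (hq : ∑ i, q i = 1) (ha : ∀ i, a i = 1 ∨ a i = -1) :
    ∑ i, ∑ j, q i * q j * (if a i ≠ a j then (1 : ℝ) else 0) =
      (1 - (∑ i, q i * a i) ^ 2) / 2 := by
  simp only [ite_ne_eq_one_sub_mul_div_two (ha _) (ha _)]
  calc ∑ i, ∑ j, q i * q j * ((1 - a i * a j) / 2)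
      = ((∑ i, q i) * ∑ j, q j - (∑ i, q i * a i) * ∑ j, q j * a j) / 2 := by
        simp only [Finset.sum_mul_sum, Finset.sum_div, ← Finset.sum_sub_distrib]
        exact Finset.sum_congr rfl fun i _ => Finset.sum_congr rfl fun j _ => by ring
    _ = (1 - (∑ i, q i * a i) ^ 2) / 2 := by rw [hq]; ring

theorem abs_sum_mul_le_one (hq0 : ∀ i, 0 ≤ q i) (hq : ∑ i, q i = 1) (ha : ∀ i, |a i| ≤ 1) :
    |∑ i, q i * a i| ≤ 1 :=
  calc |∑ i, q i * a i| ≤ ∑ i, |q i * a i| := Finset.abs_sum_le_sum_abs _ _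
    _ ≤ ∑ i, q i := Finset.sum_le_sum fun i _ => by
        rw [abs_mul, abs_of_nonneg (hq0 i)]
        exact mul_le_of_le_one_right (hq0 i) (ha i)
    _ = 1 := hq

end WeightedVote

/-- Finite-ensemble C-bound: for classifiers `h₁,…,h_K : X → {-1,+1}` and
nonnegative weights `q₁,…,q_K` summing to `1`, if the weighted Gibbs risk
`r = ∫ ∑ₖ qₖ I[hₖ(x) ≠ y] dD` is `< 1/2`, then the weighted disagreement
`d = ∫ ∑ₖ ∑ₖ' qₖ qₖ' I[hₖ(x) ≠ hₖ'(x)] dD` is `< 1/2` and the risk of the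
weighted majority vote is at most `1 - (1 - 2r)² / (1 - 2d)`. -/
theorem finite_ensemble_cBound {X : Type*} [MeasurableSpace X]
    (D : Measure (X × ℝ)) [IsProbabilityMeasure D]
    (hD : ∀ᵐ p ∂D, p.2 = 1 ∨ p.2 = -1)
    (K : ℕ) (h : Fin K → X → ℝ)
    (hmeas : ∀ k, Measurable (h k))
    (hval : ∀ k x, h k x = 1 ∨ h k x = -1)
    (q : Fin K → ℝ) (hq : ∀ k, 0 ≤ q k) (hqsum : ∑ k, q k = 1)
    (hr : ∫ p, ∑ k, q k * (if h k p.1 ≠ p.2 then (1 : ℝ) else 0) ∂D < 1 / 2) :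
    ∫ p, ∑ k, ∑ k', q k * q k' * (if h k p.1 ≠ h k' p.1 then (1 : ℝ) else 0) ∂D < 1 / 2 ∧
    (D {p | p.2 * ∑ k, q k * h k p.1 ≤ 0}).toReal ≤
      1 - (1 - 2 * ∫ p, ∑ k, q k * (if h k p.1 ≠ p.2 then (1 : ℝ) else 0) ∂D) ^ 2 /
        (1 - 2 * ∫ p, ∑ k, ∑ k', q k * q k' * (if h k p.1 ≠ h k' p.1 then (1 : ℝ) else 0) ∂D) := by
  set M : X × ℝ → ℝ := fun p => p.2 * ∑ k, q k * h k p.1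
  have hM_meas : Measurable M :=
    measurable_snd.mul ((Finset.measurable_sum _ fun k _ => (hmeas k).const_mul _).comp
      measurable_fst)
  have hM_sq : ∀ᵐ p ∂D, M p ^ 2 = (∑ k, q k * h k p.1) ^ 2 := by
    filter_upwards [hD] with p hp
    rcases hp with hp | hp <;> simp [M, hp]
  have hM : MemLp M 2 D := MemLp.of_bound hM_meas.aestronglyMeasurable 1 <| by
    filter_upwards [hD] with p hp
    have hvote := abs_sum_mul_le_one (a := fun k => h k p.1) hq hqsum fun k => by
      rcases hval k p.1 with hv | hv <;> simp [hv]
    rcases hp with hp | hp <;> simpa [M, hp] using hvote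
  have hr_eq : ∫ p, ∑ k, q k * (if h k p.1 ≠ p.2 then (1 : ℝ) else 0) ∂D =
      (1 - ∫ p, M p ∂D) / 2 := by
    rw [← integral_one_sub_div_two (hM.integrable one_le_two)]
    refine integral_congr_ae ?_
    filter_upwards [hD] with p hp
    exact sum_mul_ite_ne_eq hqsum (fun k => hval k p.1) hp
  have hd_eq : ∫ p, ∑ k, ∑ k', q k * q k' * (if h k p.1 ≠ h k' p.1 then (1 : ℝ) else 0) ∂D =
      (1 - ∫ p, M p ^ 2 ∂D) / 2 := by
    rw [← integral_one_sub_div_two hM.integrable_sq]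
    refine integral_congr_ae ?_
    filter_upwards [hM_sq] with p hp
    rw [hp]
    exact sum_sum_mul_ite_ne_eq hqsum fun k => hval k p.1
  rw [hr_eq] at hr ⊢
  rw [hd_eq]
  have hpos : 0 < ∫ p, M p ∂D := by linarith
  refine ⟨by linarith [integral_sq_pos_of_integral_pos hM_meas hM hpos], ?_⟩
  convert measureReal_nonpos_le_one_sub_sq_integral_div_integral_sq hM_meas hM hpos using 2
  · rfl
  all_goals ring
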